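/- arXiv:1709.09723 — 3 statements merged into one kernel-verified Lean document; each statement's English description precedes it below -/
import Mathlib

section
/- For every real number x, the hyperbolic cosine admits the infinite product expansion cosh(x) = ∏_{m=1}^∞ (1 + 4x²/(π²(2m−1)²)); in particular the family (1 + 4x²/(π²(2m−1)²))_{m≥1} is multipliable. -/
/-!
Euler's sine product at `2w` and at `w` (with `z = π w`) gives `cos z = sin 2z / (2 sin z)` as a
limit of quotients of partial products: the factors `1 - (2w)² / (j + 1)²` of the product for
`sin 2z` with `j + 1 = 2(m + 1)` even are exactly the factors for `sin z`, and those with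
`j + 1 = 2m + 1` odd are `1 - 4 z² / (π² (2m + 1)²)`. Taking `z = i x` turns this into the product
for `cosh x`; over `ℝ` the product is multipliable because `∑ 1 / (2m + 1)²` converges.
-/

open Real Filter Topology Finset

theorem Finset.prod_range_two_mul {M : Type*} [CommMonoid M] (f : ℕ → M) (n : ℕ) :
    ∏ j ∈ range (2 * n), f j = ∏ m ∈ range n, (f (2 * m) * f (2 * m + 1)) := by
  induction n with
  | zero => simp
  | succ n ih => rw [Nat.mul_succ, prod_range_succ, prod_range_succ, ih, prod_range_succ, mul_assoc]

theorem Complex.tendsto_euler_cos_prod {z : ℂ} (hz : Complex.sin z ≠ 0) :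
    Tendsto (fun n : ℕ => ∏ m ∈ range n, (1 - 4 * z ^ 2 / (π ^ 2 * (2 * (m : ℂ) + 1) ^ 2)))
      atTop (𝓝 (Complex.cos z)) := by
  have hπ : (π : ℂ) ≠ 0 := Complex.ofReal_ne_zero.mpr pi_ne_zero
  set w := z / π
  have hw : π * w = z := mul_div_cancel₀ z hπ
  set S : ℕ → ℂ := fun n => π * w * ∏ j ∈ range n, (1 - w ^ 2 / ((j : ℂ) + 1) ^ 2)
  set C : ℕ → ℂ := fun n => ∏ m ∈ range n, (1 - 4 * z ^ 2 / (π ^ 2 * (2 * (m : ℂ) + 1) ^ 2))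
  have hS : Tendsto S atTop (𝓝 (Complex.sin z)) := hw ▸ Complex.tendsto_euler_sin_prod w
  have hS₂ : Tendsto (fun n => 2 * S n * C n) atTop (𝓝 (Complex.sin (2 * z))) := by
    have h := (Complex.tendsto_euler_sin_prod (2 * w)).comp
      (tendsto_id.const_mul_atTop' two_pos)
    rw [show (π : ℂ) * (2 * w) = 2 * z by rw [← hw]; ring] at h
    refine h.congr fun n => ?_
    have hodd (m : ℕ) : 1 - (2 * w) ^ 2 / (((2 * m : ℕ) : ℂ) + 1) ^ 2 =
        1 - 4 * z ^ 2 / (π ^ 2 * (2 * (m : ℂ) + 1) ^ 2) := by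
      rw [← hw]; push_cast; field_simp; ring
    have heven (m : ℕ) : 1 - (2 * w) ^ 2 / (((2 * m + 1 : ℕ) : ℂ) + 1) ^ 2 =
        1 - w ^ 2 / ((m : ℂ) + 1) ^ 2 := by
      push_cast
      rw [show 2 * (m : ℂ) + 1 + 1 = 2 * (m + 1) by ring, mul_pow, mul_pow,
        mul_div_mul_left _ _ (pow_ne_zero 2 two_ne_zero)]
    simp only [Function.comp_apply, id, S, C, prod_range_two_mul, prod_mul_distrib, hodd, heven]
    rw [← hw]; ring
  have hdiv := hS₂.div (hS.const_mul 2) (mul_ne_zero two_ne_zero hz)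
  rw [Complex.sin_two_mul, mul_div_cancel_left₀ _ (mul_ne_zero two_ne_zero hz)] at hdiv
  refine hdiv.congr' ?_
  filter_upwards [hS.eventually_ne hz] with n hn
  simp only [Pi.div_apply]
  field_simp

theorem Real.tendsto_euler_cosh_prod {x : ℝ} (hx : x ≠ 0) :
    Tendsto (fun n : ℕ => ∏ m ∈ range n, (1 + 4 * x ^ 2 / (π ^ 2 * (2 * (m : ℝ) + 1) ^ 2)))
      atTop (𝓝 (cosh x)) := by
  have hsin : Complex.sin (x * Complex.I) ≠ 0 := by
    rw [Complex.sin_mul_I, ← Complex.ofReal_sinh]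
    exact mul_ne_zero (Complex.ofReal_ne_zero.mpr (sinh_ne_zero.mpr hx)) Complex.I_ne_zero
  have h := Complex.tendsto_euler_cos_prod hsin
  rw [Complex.cos_mul_I, ← Complex.ofReal_cosh] at h
  rw [← tendsto_ofReal_iff]
  refine h.congr fun n => ?_
  push_cast
  refine prod_congr rfl fun m _ => ?_
  rw [mul_pow, Complex.I_sq]
  ring

theorem summable_one_div_two_mul_add_one_sq :
    Summable (fun m : ℕ => 1 / (2 * (m : ℝ) + 1) ^ 2) := by
  have := (Real.summable_one_div_nat_pow.mpr one_lt_two).comp_injective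
    (i := fun m : ℕ => 2 * m + 1) (fun a b h => by simpa using h)
  simpa [Function.comp_def] using this

/-- For every real `x`, the hyperbolic cosine admits the infinite product expansion
`cosh x = ∏_{m=1}^∞ (1 + 4 x² / (π² (2m - 1)²))` (indexed here by `m : ℕ` with factor
`(2m + 1)²`, i.e. `m = 0` corresponds to the first factor `(2·1 - 1)² = 1`), and the
family of factors is multipliable. -/
theorem cosh_eq_tprod_one_add_sq (x : ℝ) :
    Multipliable (fun m : ℕ => 1 + 4 * x ^ 2 / (π ^ 2 * (2 * (m : ℝ) + 1) ^ 2)) ∧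
      Real.cosh x = ∏' m : ℕ, (1 + 4 * x ^ 2 / (π ^ 2 * (2 * (m : ℝ) + 1) ^ 2)) := by
  have hsum : Summable (fun m : ℕ => 4 * x ^ 2 / (π ^ 2 * (2 * (m : ℝ) + 1) ^ 2)) :=
    (summable_one_div_two_mul_add_one_sq.mul_left (4 * x ^ 2 / π ^ 2)).congr fun m => by
      field_simp
  have hmul := Real.multipliable_one_add_of_summable hsum
  refine ⟨hmul, ?_⟩
  rcases eq_or_ne x 0 with rfl | hx
  · simp
  exact tendsto_nhds_unique (tendsto_euler_cosh_prod hx) hmul.hasProd.tendsto_prod_nat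
end

section
/- Let (Ω, 𝔉, μ) be a probability space, (E_m)_{m≥1} an i.i.d. sequence of exponential random variables with rate 1, and W = (2/π²) Σ_{m=1}^∞ E_m/(2m−1)². Then for every t ≥ 0, E[e^{−tW}] = ∏_{m=1}^∞ (1 + 2t/(π²(2m−1)²))^{−1}, and the product is multipliable. -/
/-!
`t W = ∑ s_m E_m` with `s_m = 2t / (π² (2m+1)²)` is a series of independent nonnegative
variables. Since `∑ E[s_m E_m] = ∑ s_m < ∞`, this series converges almost surely.
For every finite set of indices, independence factorizes `E[exp(-∑ s_m E_m)]` into the Laplace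
transforms `E[exp(-s E)] = 1 / (1 + s)` of the exponential law. Dominated convergence (all
integrands lie in `[0, 1]`) along the directed set of finite index sets then identifies the
limit as the unconditional infinite product.
-/

open MeasureTheory ProbabilityTheory Real Filter
open scoped ENNReal

namespace ProbabilityTheory

variable {Ω ι : Type*} [MeasurableSpace Ω] {μ : Measure Ω}

lemma iIndepFun.integral_finset_prod {X : ι → Ω → ℝ} (hX : iIndepFun X μ)
    (mX : ∀ i, AEStronglyMeasurable (X i) μ) (s : Finset ι) :
    ∫ ω, ∏ i ∈ s, X i ω ∂μ = ∏ i ∈ s, ∫ ω, X i ω ∂μ := by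
  calc ∫ ω, ∏ i ∈ s, X i ω ∂μ = ∫ ω, ∏ i : s, X i ω ∂μ := by
        congr 1 with ω
        exact (Finset.prod_coe_sort s fun i => X i ω).symm
    _ = ∏ i : s, ∫ ω, X i ω ∂μ :=
      (hX.precomp Subtype.val_injective).integral_fun_prod_eq_prod_integral fun i => mX i
    _ = ∏ i ∈ s, ∫ ω, X i ω ∂μ := Finset.prod_coe_sort s fun i => ∫ ω, X i ω ∂μ

theorem iIndepFun.hasProd_integral_exp_neg [Countable ι] {X : ι → Ω → ℝ}
    (hindep : iIndepFun X μ) (hmeas : ∀ i, AEMeasurable (X i) μ)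
    (hnonneg : ∀ i, 0 ≤ᵐ[μ] X i) (hsum : ∀ᵐ ω ∂μ, Summable fun i => X i ω) :
    HasProd (fun i => ∫ ω, exp (-X i ω) ∂μ) (∫ ω, exp (-∑' i, X i ω) ∂μ) := by
  have := hindep.isProbabilityMeasure
  have hexp_meas (i : ι) : AEStronglyMeasurable (fun ω => exp (-X i ω)) μ :=
    (hmeas i).neg.exp.aestronglyMeasurable
  have hexp_indep : iIndepFun (fun i ω => exp (-X i ω)) μ :=
    hindep.comp (fun _ x => exp (-x)) fun _ => by fun_prop
  unfold HasProd
  simp_rw [← hexp_indep.integral_finset_prod hexp_meas]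
  refine tendsto_integral_filter_of_dominated_convergence (fun _ => 1)
    (Eventually.of_forall fun s => Finset.aestronglyMeasurable_fun_prod s fun i _ => hexp_meas i)
    (Eventually.of_forall fun s => ?_) (integrable_const 1) ?_
  · filter_upwards [ae_all_iff.2 hnonneg] with ω hω
    rw [norm_of_nonneg (by positivity), ← exp_sum, exp_le_one_iff, Finset.sum_neg_distrib,
      neg_nonpos]
    exact Finset.sum_nonneg fun i _ => hω i
  · filter_upwards [hsum] with ω hω
    simp_rw [← exp_sum, Finset.sum_neg_distrib]
    exact (continuous_exp.comp continuous_neg).continuousAt.tendsto.comp hω.hasSum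

lemma expMeasure_eq_withDensity (r : ℝ) :
    expMeasure r = volume.withDensity (exponentialPDF r) :=
  rfl

lemma measurable_exponentialPDF (r : ℝ) : Measurable (exponentialPDF r) :=
  (measurable_exponentialPDFReal r).ennreal_ofReal

lemma ae_nonneg_expMeasure (r : ℝ) : ∀ᵐ x ∂expMeasure r, 0 ≤ x := by
  rw [ae_iff, expMeasure_eq_withDensity]
  simp only [not_le]
  exact (withDensity_apply _ measurableSet_Iio).trans (lintegral_exponentialPDF_of_nonpos le_rfl)

lemma integral_exp_neg_mul_expMeasure {r s : ℝ} (hr : 0 < r) (hrs : 0 < r + s) :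
    ∫ x, exp (-(s * x)) ∂expMeasure r = r / (r + s) := by
  have hmeas : Measurable fun x => exp (-(s * x)) := by fun_prop
  have hdensity (x : ℝ) : exponentialPDF r x * ENNReal.ofReal (exp (-(s * x)))
      = ENNReal.ofReal (r / (r + s)) * exponentialPDF (r + s) x := by
    rcases lt_or_ge x 0 with hx | hx
    · simp [exponentialPDF_of_neg hx]
    · rw [exponentialPDF_of_nonneg hx, exponentialPDF_of_nonneg hx,
        ← ENNReal.ofReal_mul (by positivity), ← ENNReal.ofReal_mul (by positivity)]
      congr 1
      field_simp
      rw [← exp_add]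
      ring_nf
  rw [integral_eq_lintegral_of_nonneg_ae (ae_of_all _ fun x => (exp_pos _).le)
      hmeas.aestronglyMeasurable, expMeasure_eq_withDensity,
    lintegral_withDensity_eq_lintegral_mul₀ (measurable_exponentialPDF r).aemeasurable
      hmeas.ennreal_ofReal.aemeasurable]
  simp only [Pi.mul_apply, hdensity]
  rw [lintegral_const_mul _ (measurable_exponentialPDF _), lintegral_exponentialPDF_eq_one hrs,
    mul_one, ENNReal.toReal_ofReal (by positivity)]

lemma lintegral_enorm_expMeasure {r : ℝ} (hr : 0 < r) :
    ∫⁻ x, ‖x‖ₑ ∂expMeasure r = ENNReal.ofReal r⁻¹ := by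
  have hdensity (x : ℝ) :
      exponentialPDF r x * ‖x‖ₑ = ENNReal.ofReal r⁻¹ * gammaPDF 2 r x := by
    rcases lt_or_ge x 0 with hx | hx
    · simp [exponentialPDF_of_neg hx, gammaPDF_of_neg hx]
    · rw [exponentialPDF_of_nonneg hx, gammaPDF_of_nonneg hx, enorm_eq_ofReal hx,
        ← ENNReal.ofReal_mul (by positivity), ← ENNReal.ofReal_mul (by positivity)]
      congr 1
      norm_num [Gamma_two]
      field_simp
  rw [expMeasure_eq_withDensity, lintegral_withDensity_eq_lintegral_mul₀
      (measurable_exponentialPDF r).aemeasurable measurable_enorm.aemeasurable]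
  simp only [Pi.mul_apply, hdensity]
  rw [lintegral_const_mul (f := gammaPDF 2 r) _
      (measurable_gammaPDFReal _ _).ennreal_ofReal,
    lintegral_gammaPDF_eq_one two_pos hr, mul_one]

theorem ae_summable_mul_of_map_eq_expMeasure [Countable ι] {X : ι → Ω → ℝ} {r : ℝ}
    (hr : 0 < r) (hX : ∀ i, Measurable (X i)) (hlaw : ∀ i, μ.map (X i) = expMeasure r)
    {c : ι → ℝ} (hc : Summable c) :
    ∀ᵐ ω ∂μ, Summable fun i => c i * X i ω := by
  have hmass (i : ι) :
      eLpNorm (fun ω => c i * X i ω) 1 μ = ‖c i‖ₑ * ENNReal.ofReal r⁻¹ := by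
    simp_rw [eLpNorm_one_eq_lintegral_enorm, enorm_mul]
    rw [lintegral_const_mul _ (hX i).enorm, ← lintegral_map measurable_enorm (hX i), hlaw i,
      lintegral_enorm_expMeasure hr]
  have hmass_sum : ∑' i, eLpNorm (fun ω => c i * X i ω) 1 μ ≠ ∞ := by
    simp_rw [hmass, ENNReal.tsum_mul_right]
    exact ENNReal.mul_ne_top (tsum_enorm_ne_top_iff_summable_norm.2 (summable_norm_iff.2 hc))
      ENNReal.ofReal_ne_top
  filter_upwards [summable_norm_of_tsum_eLpNorm_ne_top le_rfl (fun i => by fun_prop) hmass_sum]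
    with ω hω using hω.of_norm

end ProbabilityTheory

lemma summable_inv_two_mul_add_one_sq : Summable fun m : ℕ => ((2 * (m : ℝ) + 1) ^ 2)⁻¹ := by
  have hinj : Function.Injective fun m : ℕ => 2 * m + 1 := fun a b h => by simpa using h
  simpa [Function.comp_def] using (Real.summable_nat_pow_inv.2 one_lt_two).comp_injective hinj

theorem pg_mgf_eq_tprod_general
    {Ω : Type*} [MeasurableSpace Ω] (μ : Measure Ω)
    (E : ℕ → Ω → ℝ) (hmeas : ∀ m, Measurable (E m))
    (hindep : iIndepFun E μ)
    (hdist : ∀ m, μ.map (E m) = expMeasure 1)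
    (t : ℝ) (ht : 0 ≤ t) :
    Multipliable (fun m : ℕ => (1 + 2 * t / (π ^ 2 * (2 * (m : ℝ) + 1) ^ 2))⁻¹) ∧
      ∫ ω, Real.exp (-t * ((2 / π ^ 2) * ∑' m : ℕ, E m ω / (2 * (m : ℝ) + 1) ^ 2)) ∂μ
        = ∏' m : ℕ, (1 + 2 * t / (π ^ 2 * (2 * (m : ℝ) + 1) ^ 2))⁻¹ := by
  set s : ℕ → ℝ := fun m => 2 * t / (π ^ 2 * (2 * (m : ℝ) + 1) ^ 2)
  have hs_nonneg (m : ℕ) : 0 ≤ s m := by positivity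
  have hs_summable : Summable s :=
    (summable_inv_two_mul_add_one_sq.mul_left (2 * t / π ^ 2)).congr fun m => by
      simp only [s]; field_simp
  have hE_nonneg (m : ℕ) : 0 ≤ᵐ[μ] E m :=
    (ae_map_iff (hmeas m).aemeasurable measurableSet_Ici).1 (hdist m ▸ ae_nonneg_expMeasure 1)
  have hfactor (m : ℕ) : ∫ ω, exp (-(s m * E m ω)) ∂μ = (1 + s m)⁻¹ := by
    rw [← integral_map (f := fun x => exp (-(s m * x))) (hmeas m).aemeasurable (by fun_prop),
      hdist m, integral_exp_neg_mul_expMeasure one_pos (by linarith [hs_nonneg m]), one_div]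
  have hW (ω : Ω) : -t * ((2 / π ^ 2) * ∑' m, E m ω / (2 * (m : ℝ) + 1) ^ 2)
      = -∑' m, s m * E m ω := by
    rw [← tsum_mul_left, ← tsum_mul_left, ← tsum_neg]
    congr 1 with m
    simp only [s]; field_simp
  have hprod := iIndepFun.hasProd_integral_exp_neg (X := fun m ω => s m * E m ω)
    (hindep.comp (fun m x => s m * x) fun m => by fun_prop)
    (fun m => ((hmeas m).const_mul (s m)).aemeasurable)
    (fun m => (hE_nonneg m).mono fun ω hω => mul_nonneg (hs_nonneg m) hω)
    (ae_summable_mul_of_map_eq_expMeasure one_pos hmeas hdist hs_summable)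
  simp_rw [hfactor, ← hW] at hprod
  exact ⟨hprod.multipliable, hprod.tprod_eq.symm⟩

/-- Let `(E_m)` be i.i.d. exponential rate-1 random variables on a probability space and
`W = (2 / π²) ∑' m, E m / (2m + 1)²` (the PG(1,0) random variable). Then for every `t ≥ 0`,
`E[exp (-t W)] = ∏_{m=1}^∞ (1 + 2 t / (π² (2m - 1)²))⁻¹` (indexed here by `m : ℕ` with
factor `(2m + 1)²`), and the product is multipliable. -/
theorem pg_mgf_eq_tprod
    {Ω : Type*} [MeasurableSpace Ω] (μ : Measure Ω) [IsProbabilityMeasure μ]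
    (E : ℕ → Ω → ℝ) (hmeas : ∀ m, Measurable (E m))
    (hindep : iIndepFun E μ)
    (hdist : ∀ m, μ.map (E m) = expMeasure 1)
    (t : ℝ) (ht : 0 ≤ t) :
    Multipliable (fun m : ℕ => (1 + 2 * t / (π ^ 2 * (2 * (m : ℝ) + 1) ^ 2))⁻¹) ∧
      ∫ ω, Real.exp (-t * ((2 / π ^ 2) * ∑' m : ℕ, E m ω / (2 * (m : ℝ) + 1) ^ 2)) ∂μ
        = ∏' m : ℕ, (1 + 2 * t / (π ^ 2 * (2 * (m : ℝ) + 1) ^ 2))⁻¹ :=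
  pg_mgf_eq_tprod_general μ E hmeas hindep hdist t ht
end

section
/- For every a ∈ {0,1}, every w > 0 and every x ∈ ℝ, setting ỹ = (a − 1/2)/w, one has the exact identity (e^x)^a/(1+e^x) · cosh(x/2) · exp(−w x²/2) = (1/2) · exp((a−1/2)²/(2w)) · exp(−(w/2)(ỹ − x)²). In particular, as a function of x, the product of the Bernoulli logit likelihood and the Polya-Gamma tilting factor cosh(x/2)e^{−wx²/2} is proportional to the Gaussian density N(ỹ; x, 1/w), with proportionality constant depending only on a and w. -/
open Real

/-- For every `a ∈ {0, 1}`, `w > 0` and `x ∈ ℝ`, setting `ỹ = (a - 1/2) / w`, the product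
of the Bernoulli logit likelihood and the Polya-Gamma tilting factor satisfies the exact
identity
`(e^x)^a / (1 + e^x) · cosh (x/2) · exp (-w x² / 2)
  = (1/2) · exp ((a - 1/2)² / (2w)) · exp (-(w/2) (ỹ - x)²)`,
i.e. as a function of `x` it is proportional to the Gaussian density `N(ỹ; x, 1/w)` with
constant depending only on `a` and `w`. -/
theorem bernoulli_logit_pg_tilt_eq_gaussian
    (a : ℝ) (ha : a = 0 ∨ a = 1) (w x : ℝ) (hw : 0 < w) :
    Real.exp x ^ a / (1 + Real.exp x) * Real.cosh (x / 2) * Real.exp (-(w * x ^ 2) / 2)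
      = (1 / 2) * Real.exp ((a - 1 / 2) ^ 2 / (2 * w)) *
          Real.exp (-(w / 2) * ((a - 1 / 2) / w - x) ^ 2) := by
  have hpos : (0:ℝ) < 1 + Real.exp x := by positivity
  have hcosh : Real.cosh (x / 2) = Real.exp (-(x/2)) * (1 + Real.exp x) / 2 := by
    rw [Real.cosh_eq]
    rw [show Real.exp (-(x/2)) * (1 + Real.exp x) = Real.exp (-(x/2)) + Real.exp (x/2) by
      rw [mul_add, mul_one, ← Real.exp_add]; ring_nf]
    ring
  have key : ∀ b : ℝ, (b - 1/2) * x - w * x ^ 2 / 2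
      = (b - 1/2)^2 / (2*w) + (-(w/2) * ((b - 1/2)/w - x)^2) := by
    intro b; field_simp; ring
  rcases ha with rfl | rfl
  · rw [Real.rpow_zero, hcosh]
    rw [show (1:ℝ) / (1 + Real.exp x) * (Real.exp (-(x/2)) * (1 + Real.exp x) / 2)
      = Real.exp (-(x/2)) / 2 by field_simp]
    rw [div_mul_eq_mul_div]
    rw [← Real.exp_add, show -(x/2) + -(w * x^2)/2 = ((0:ℝ) - 1/2)*x - w * x^2/2 by ring, key 0, Real.exp_add]
    ring
  · rw [Real.rpow_one, hcosh]
    rw [show Real.exp x / (1 + Real.exp x) * (Real.exp (-(x/2)) * (1 + Real.exp x) / 2)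
      = Real.exp x * Real.exp (-(x/2)) / 2 by field_simp]
    rw [← Real.exp_add, div_mul_eq_mul_div]
    rw [← Real.exp_add, show x + -(x/2) + -(w * x^2)/2 = ((1:ℝ) - 1/2)*x - w * x^2/2 by ring, key 1, Real.exp_add]
    ring
end
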